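/- arXiv:1702.07697 — 4 statements merged into one kernel-verified Lean document; each statement's English description precedes it below -/
import Mathlib

section
/- Let a(z), b(z) ∈ C[z,z^{-1}] be Laurent polynomials, k ∈ Z, and σ, τ ∈ {-1,1}. Define I = (1/2)‖(a + σ z^k conj(a~))(b + τ z^k conj(b~))‖_2^2 + (1/2)‖(a~ - σ z^k conj(a))(b~ - τ z^k conj(b))‖_2^2, where a~(z)=a(-z) and conj denotes the Laurent-polynomial conjugate (conj(Σ a_j z^j) = Σ conj(a_j) z^{-j}). Then I = 2‖ab‖_2^2 + 2‖a b~‖_2^2 + 2στ Re ∫ a a~ conj(b b~) + 2στ Re ∫ z^{-2k} a a~ b b~, where ∫ h denotes the constant coefficient of the Laurent polynomial h, and ‖·‖_2 is the L^2 norm on the unit circle. -/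
noncomputable def circ (θ : ℝ) : ℂ := Complex.exp (θ * Complex.I)

noncomputable def evalL (c : ℤ →₀ ℂ) (z : ℂ) : ℂ := c.sum fun j a => a * z ^ j

/-!
For `‖w‖ = 1` and `s = ±1` one has `‖A + s w conj A'‖² = ‖A‖² + ‖A'‖² + 2 s Re (conj w A A')`, and
the same with `-2 s` for `A' - s w conj A`. Writing the two squared norms of products as products
of such factors and averaging them, the cross terms collapse to `4 s t Re p Re q` with
`p = conj w A A'`, `q = conj w B B'`, and `2 Re p Re q = Re (p conj q) + Re (p q)` produces the two
`στ` terms pointwise, leaving `‖AB‖² + ‖AB'‖² + ‖A'B‖² + ‖A'B'‖²`. On the circle, `θ ↦ θ + π`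
exchanges `a(z)` with `a(-z)` and `b(z)` with `b(-z)`, so `‖A'B'‖²` and `‖A'B‖²` have the same
integrals as `‖AB‖²` and `‖AB'‖²`.
-/

open ComplexConjugate Function Real

theorem Complex.two_mul_re_mul_re (u v : ℂ) : 2 * u.re * v.re = (u * conj v).re + (u * v).re := by
  simp only [mul_re, conj_re, conj_im]
  ring

theorem norm_add_mul_conj_sq (A A' w : ℂ) {s : ℝ} (hs : s ^ 2 = 1) (hw : ‖w‖ = 1) :
    ‖A + s * w * conj A'‖ ^ 2 = ‖A‖ ^ 2 + ‖A'‖ ^ 2 + 2 * s * (conj w * (A * A')).re := by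
  have hcross : A * conj (s * w * conj A') = s * (conj w * (A * A')) := by
    simp only [map_mul, Complex.conj_ofReal, Complex.conj_conj]
    ring
  rw [Complex.sq_norm, Complex.normSq_add, ← Complex.sq_norm, ← Complex.sq_norm, hcross,
    Complex.re_ofReal_mul, norm_mul, norm_mul, hw, Complex.norm_real, Real.norm_eq_abs,
    mul_pow, mul_pow, sq_abs, hs, Complex.norm_conj]
  ring

theorem norm_sub_mul_conj_sq (A A' w : ℂ) {s : ℝ} (hs : s ^ 2 = 1) (hw : ‖w‖ = 1) :
    ‖A - s * w * conj A'‖ ^ 2 = ‖A‖ ^ 2 + ‖A'‖ ^ 2 - 2 * s * (conj w * (A * A')).re := by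
  have h := norm_add_mul_conj_sq A A' w (s := -s) (by rw [neg_sq, hs]) hw
  push_cast at h
  rw [sub_eq_add_neg, ← neg_mul, ← neg_mul, h]
  ring

theorem twisted_products_norm_sq (A A' B B' w : ℂ) {s t : ℝ} (hs : s ^ 2 = 1) (ht : t ^ 2 = 1)
    (hw : ‖w‖ = 1) :
    1 / 2 * ‖(A + s * w * conj A') * (B + t * w * conj B')‖ ^ 2
      + 1 / 2 * ‖(A' - s * w * conj A) * (B' - t * w * conj B)‖ ^ 2
    = ‖A * B‖ ^ 2 + ‖A * B'‖ ^ 2 + ‖A' * B‖ ^ 2 + ‖A' * B'‖ ^ 2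
      + 2 * s * t * (A * A' * conj (B * B')).re
      + 2 * s * t * (conj w ^ 2 * (A * A' * (B * B'))).re := by
  have hww : conj w * w = 1 := by
    rw [mul_comm, Complex.mul_conj, Complex.normSq_eq_norm_sq, hw]; norm_num
  have hprod := Complex.two_mul_re_mul_re (conj w * (A * A')) (conj w * (B * B'))
  rw [show conj w * (A * A') * conj (conj w * (B * B')) = A * A' * conj (B * B') by
      rw [map_mul (starRingEnd ℂ) (conj w), Complex.conj_conj]
      linear_combination (A * A' * conj (B * B')) * hww,
    show conj w * (A * A') * (conj w * (B * B')) = conj w ^ 2 * (A * A' * (B * B')) by ring] at hprod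
  simp only [norm_mul, mul_pow]
  rw [norm_add_mul_conj_sq A A' w hs hw, norm_add_mul_conj_sq B B' w ht hw,
    norm_sub_mul_conj_sq A' A w hs hw, norm_sub_mul_conj_sq B' B w ht hw,
    mul_comm A' A, mul_comm B' B]
  linear_combination (2 * s * t) * hprod

theorem Function.Periodic.intervalIntegral_comp_add_right {E : Type*} [NormedAddCommGroup E]
    [NormedSpace ℝ E] {f : ℝ → E} {T : ℝ} (hf : Periodic f T) (c : ℝ) :
    ∫ x in 0..T, f (x + c) = ∫ x in 0..T, f x := by
  rw [intervalIntegral.integral_comp_add_right, zero_add, add_comm, hf.intervalIntegral_add_eq c 0,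
    zero_add]

theorem intervalIntegral_twisted_products_norm_sq {A B w : ℝ → ℂ} (hA : Continuous A)
    (hB : Continuous B) (hw : Continuous w) (hAp : Periodic A (2 * π)) (hBp : Periodic B (2 * π))
    (hw1 : ∀ θ, ‖w θ‖ = 1) {s t : ℝ} (hs : s ^ 2 = 1) (ht : t ^ 2 = 1) :
    1 / 2 * (∫ θ in 0..2 * π,
        ‖(A θ + s * w θ * conj (A (θ + π))) * (B θ + t * w θ * conj (B (θ + π)))‖ ^ 2)
      + 1 / 2 * (∫ θ in 0..2 * π,
        ‖(A (θ + π) - s * w θ * conj (A θ)) * (B (θ + π) - t * w θ * conj (B θ))‖ ^ 2)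
    = 2 * (∫ θ in 0..2 * π, ‖A θ * B θ‖ ^ 2) + 2 * (∫ θ in 0..2 * π, ‖A θ * B (θ + π)‖ ^ 2)
      + 2 * s * t * (∫ θ in 0..2 * π, A θ * A (θ + π) * conj (B θ * B (θ + π))).re
      + 2 * s * t * (∫ θ in 0..2 * π,
          conj (w θ) ^ 2 * (A θ * A (θ + π) * (B θ * B (θ + π)))).re := by
  have hint : ∀ f : ℝ → ℝ, Continuous f → IntervalIntegrable f MeasureTheory.volume 0 (2 * π) :=
    fun f hf => hf.intervalIntegrable _ _
  have hre : ∀ f : ℝ → ℂ, Continuous f →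
      ∫ θ in 0..2 * π, (f θ).re = (∫ θ in 0..2 * π, f θ).re :=
    fun f hf => intervalIntegral.intervalIntegral_re (hf.intervalIntegrable _ _)
  have hshift₁ : ∫ θ in 0..2 * π, ‖A (θ + π) * B (θ + π)‖ ^ 2 = ∫ θ in 0..2 * π, ‖A θ * B θ‖ ^ 2 :=
    ((hAp.mul hBp).comp fun z => ‖z‖ ^ 2).intervalIntegral_comp_add_right π
  have hshift₂ : ∫ θ in 0..2 * π, ‖A (θ + π) * B θ‖ ^ 2 = ∫ θ in 0..2 * π, ‖A θ * B (θ + π)‖ ^ 2 := by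
    have hg : Periodic (fun x => ‖A x * B (x + π)‖ ^ 2) (2 * π) := fun x => by
      simp only [hAp x, add_right_comm x (2 * π) π, hBp (x + π)]
    rw [← hg.intervalIntegral_comp_add_right π]
    simp only [add_assoc, ← two_mul, show ∀ x, B (x + 2 * π) = B x from hBp]
  calc _ = ∫ θ in 0..2 * π, (‖A θ * B θ‖ ^ 2 + ‖A θ * B (θ + π)‖ ^ 2 + ‖A (θ + π) * B θ‖ ^ 2
        + ‖A (θ + π) * B (θ + π)‖ ^ 2
        + 2 * s * t * (A θ * A (θ + π) * conj (B θ * B (θ + π))).re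
        + 2 * s * t * (conj (w θ) ^ 2 * (A θ * A (θ + π) * (B θ * B (θ + π)))).re) := by
        rw [← intervalIntegral.integral_const_mul, ← intervalIntegral.integral_const_mul,
          ← intervalIntegral.integral_add (hint _ (by fun_prop)) (hint _ (by fun_prop))]
        exact intervalIntegral.integral_congr fun θ _ =>
          twisted_products_norm_sq _ _ _ _ _ hs ht (hw1 θ)
    _ = _ := by
        rw [intervalIntegral.integral_add (hint _ (by fun_prop)) (hint _ (by fun_prop)),
          intervalIntegral.integral_add (hint _ (by fun_prop)) (hint _ (by fun_prop)),
          intervalIntegral.integral_add (hint _ (by fun_prop)) (hint _ (by fun_prop)),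
          intervalIntegral.integral_add (hint _ (by fun_prop)) (hint _ (by fun_prop)),
          intervalIntegral.integral_add (hint _ (by fun_prop)) (hint _ (by fun_prop)),
          intervalIntegral.integral_const_mul, intervalIntegral.integral_const_mul,
          hre _ (by fun_prop), hre _ (by fun_prop), hshift₁, hshift₂]
        ring

theorem circ_add_pi (θ : ℝ) : circ (θ + π) = -circ θ := by
  rw [circ, Complex.ofReal_add, add_mul, Complex.exp_add, Complex.exp_pi_mul_I, mul_neg_one, circ]

theorem periodic_circ : Periodic circ (2 * π) := fun θ => by
  rw [add_comm, ← neg_neg (circ θ), ← circ_add_pi, ← circ_add_pi, add_assoc, ← two_mul, add_comm]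

theorem continuous_circ : Continuous circ := by
  unfold circ; fun_prop

theorem norm_circ_zpow (θ : ℝ) (k : ℤ) : ‖circ θ ^ k‖ = 1 := by
  rw [norm_zpow, circ, Complex.norm_exp_ofReal_mul_I, one_zpow]

theorem conj_circ (θ : ℝ) : conj (circ θ) = (circ θ)⁻¹ := by
  rw [circ, ← Complex.exp_conj, ← Complex.exp_neg, map_mul, Complex.conj_ofReal, Complex.conj_I,
    mul_neg]

theorem conj_circ_zpow_sq (θ : ℝ) (k : ℤ) : conj (circ θ ^ k) ^ 2 = circ θ ^ (-(2 * k)) := by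
  rw [map_zpow₀, conj_circ, inv_zpow', ← zpow_natCast, ← zpow_mul]
  ring_nf

theorem continuous_evalL_circ (c : ℤ →₀ ℂ) : Continuous fun θ => evalL c (circ θ) := by
  simp only [evalL, Finsupp.sum]
  exact continuous_finsetSum _ fun j _ =>
    continuous_const.mul (continuous_circ.zpow₀ j fun θ => Or.inl (Complex.exp_ne_zero _))

/-- Technical lemma: expansion of the combination of squared L² norms appearing in
the Rudin-Shapiro-like recursion, for Laurent polynomials a, b. -/
theorem technical_norm_identity (a b : ℤ →₀ ℂ) (k : ℤ) (σ τ : ℝ)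
    (hσ : σ = 1 ∨ σ = -1) (hτ : τ = 1 ∨ τ = -1) :
    (1/2) * ((1 / (2 * Real.pi)) * ∫ θ in (0:ℝ)..(2 * Real.pi),
        ‖(evalL a (circ θ) + (σ : ℂ) * (circ θ) ^ k * (starRingEnd ℂ) (evalL a (-(circ θ)))) *
          (evalL b (circ θ) + (τ : ℂ) * (circ θ) ^ k * (starRingEnd ℂ) (evalL b (-(circ θ))))‖ ^ 2)
    + (1/2) * ((1 / (2 * Real.pi)) * ∫ θ in (0:ℝ)..(2 * Real.pi),
        ‖(evalL a (-(circ θ)) - (σ : ℂ) * (circ θ) ^ k * (starRingEnd ℂ) (evalL a (circ θ))) *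
          (evalL b (-(circ θ)) - (τ : ℂ) * (circ θ) ^ k * (starRingEnd ℂ) (evalL b (circ θ)))‖ ^ 2)
    = 2 * ((1 / (2 * Real.pi)) * ∫ θ in (0:ℝ)..(2 * Real.pi),
          ‖evalL a (circ θ) * evalL b (circ θ)‖ ^ 2)
      + 2 * ((1 / (2 * Real.pi)) * ∫ θ in (0:ℝ)..(2 * Real.pi),
          ‖evalL a (circ θ) * evalL b (-(circ θ))‖ ^ 2)
      + 2 * σ * τ * ((1 / (2 * Real.pi)) * (∫ θ in (0:ℝ)..(2 * Real.pi),
          evalL a (circ θ) * evalL a (-(circ θ)) *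
            (starRingEnd ℂ) (evalL b (circ θ) * evalL b (-(circ θ)))).re)
      + 2 * σ * τ * ((1 / (2 * Real.pi)) * (∫ θ in (0:ℝ)..(2 * Real.pi),
          (circ θ) ^ (-(2 * k)) * (evalL a (circ θ) * evalL a (-(circ θ)) *
            (evalL b (circ θ) * evalL b (-(circ θ))))).re) := by
  have hsq : ∀ x : ℝ, x = 1 ∨ x = -1 → x ^ 2 = 1 := by
    rintro x (rfl | rfl) <;> norm_num
  have h := intervalIntegral_twisted_products_norm_sq (continuous_evalL_circ a)
    (continuous_evalL_circ b) (continuous_circ.zpow₀ k fun θ => Or.inl (Complex.exp_ne_zero _))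
    (periodic_circ.comp (evalL a)) (periodic_circ.comp (evalL b)) (norm_circ_zpow · k)
    (hsq σ hσ) (hsq τ hτ)
  simp only [circ_add_pi, conj_circ_zpow_sq] at h
  linear_combination (1 / (2 * Real.pi)) * h
end

section
/- Let u_0, v_0, w_0 be real numbers and define (u_{n+1}, v_{n+1}, w_{n+1}) = A(u_n, v_n, w_n) where A is the 3×3 matrix with rows (2,2,2), (2,2,-2), (2,-2,2). Then for all n ≥ 0, u_n = (4^n(2u_0 + v_0 + w_0) + (-2)^n(u_0 - v_0 - w_0))/3. -/
/-! `2u + v + w` and `u - v - w` are left eigenvectors of `A` for the eigenvalues `4` and `-2`,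
so along the orbit they are multiplied by `4` and `-2` at each step; `u` is one third of their sum. -/

open Matrix

theorem Matrix.dotProduct_eq_pow_mul_of_vecMul_eq_smul {ι R : Type*} [Fintype ι] [CommSemiring R]
    {A : Matrix ι ι R} {ℓ : ι → R} {μ : R} (hℓ : ℓ ᵥ* A = μ • ℓ)
    {x : ℕ → ι → R} (hx : ∀ n, x (n + 1) = A *ᵥ x n) (n : ℕ) :
    ℓ ⬝ᵥ x n = μ ^ n * (ℓ ⬝ᵥ x 0) := by
  induction n with
  | zero => simp
  | succ n ih => rw [hx, dotProduct_mulVec, hℓ, smul_dotProduct, ih, smul_eq_mul, pow_succ']; ring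

/-- Explicit formula for the first coordinate of iterates of the matrix with rows
(2,2,2), (2,2,-2), (2,-2,2). -/
theorem matrix_iteration_formula (x : ℕ → Fin 3 → ℝ)
    (hx : ∀ n, x (n + 1) = (!![(2:ℝ), 2, 2; 2, 2, -2; 2, -2, 2]).mulVec (x n)) :
    ∀ n : ℕ, x n 0 = ((4:ℝ) ^ n * (2 * x 0 0 + x 0 1 + x 0 2)
      + (-2 : ℝ) ^ n * (x 0 0 - x 0 1 - x 0 2)) / 3 := by
  intro n
  have hfour : ![2, 1, 1] ᵥ* !![(2:ℝ), 2, 2; 2, 2, -2; 2, -2, 2] = (4:ℝ) • ![2, 1, 1] := by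
    ext i; fin_cases i <;> simp [vecMul, dotProduct, Fin.sum_univ_three] <;> norm_num
  have hnegTwo : ![1, -1, -1] ᵥ* !![(2:ℝ), 2, 2; 2, 2, -2; 2, -2, 2] = (-2:ℝ) • ![1, -1, -1] := by
    ext i; fin_cases i <;> simp [vecMul, dotProduct, Fin.sum_univ_three]
  have efour := dotProduct_eq_pow_mul_of_vecMul_eq_smul hfour hx n
  have enegTwo := dotProduct_eq_pow_mul_of_vecMul_eq_smul hnegTwo hx n
  simp only [dotProduct, Fin.sum_univ_three, Fin.isValue, cons_val_zero, cons_val_one, cons_val,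
    one_mul, neg_mul] at efour enegTwo
  linear_combination (efour + enegTwo) / 3
end

section
/- Let f_0, g_0 ∈ C[z] be nonzero polynomials of equal length with nonzero constant coefficients, let σ_0, σ_1, ... ∈ {-1,1}, and define recursively f_{n+1}(z) = f_n(z) + σ_n z^{len f_n} f_n†(-z) and g_{n+1}(z) = g_n(z) + σ_n z^{len g_n} g_n†(-z). Then for all n, ‖f_n g_n‖_2^2 / (‖f_n‖_2^2 ‖g_n‖_2^2) = [2‖f_0 g_0‖_2^2 + ‖f_0 g_0~‖_2^2 + Re ∫ f_0 f_0~ conj(g_0 g_0~)]/(3‖f_0‖_2^2‖g_0‖_2^2) + (-1/2)^n · [‖f_0 g_0‖_2^2 - ‖f_0 g_0~‖_2^2 - Re ∫ f_0 f_0~ conj(g_0 g_0~)]/(3‖f_0‖_2^2‖g_0‖_2^2). -/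
noncomputable def dagger (f : Polynomial ℂ) : Polynomial ℂ :=
  ∑ j ∈ Finset.range (f.natDegree + 1),
    Polynomial.C ((starRingEnd ℂ) (f.coeff (f.natDegree - j))) * Polynomial.X ^ j

noncomputable def n2 (f : Polynomial ℂ) : ℝ :=
  (1 / (2 * Real.pi)) * ∫ θ in (0:ℝ)..(2 * Real.pi), ‖f.eval (circ θ)‖ ^ 2

noncomputable def uu (f g : Polynomial ℂ) : ℝ :=
  (1 / (2 * Real.pi)) * ∫ θ in (0:ℝ)..(2 * Real.pi), ‖f.eval (circ θ) * g.eval (circ θ)‖ ^ 2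

noncomputable def vv (f g : Polynomial ℂ) : ℝ :=
  (1 / (2 * Real.pi)) * ∫ θ in (0:ℝ)..(2 * Real.pi), ‖f.eval (circ θ) * g.eval (-(circ θ))‖ ^ 2

noncomputable def ww (f g : Polynomial ℂ) : ℝ :=
  (1 / (2 * Real.pi)) * (∫ θ in (0:ℝ)..(2 * Real.pi),
    f.eval (circ θ) * f.eval (-(circ θ)) *
      (starRingEnd ℂ) (g.eval (circ θ) * g.eval (-(circ θ)))).re

/-!
On the unit circle `dagger f` evaluates to `z ^ d * conj (f z)` with `d = f.natDegree`, so a step of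
the recursion reads `F z = f z + c z * conj (f (-z))` and `F (-z) = f (-z) - c z * conj (f z)`,
where `c z = σ (-1) ^ d z ^ (2d + 1)` is unimodular and odd. Expanding `‖F G‖²`, `‖F G~‖²`,
`Re (F F~ conj (G G~))` and `‖F‖²` pointwise, the terms linear in `c` are odd in `z` (or cancel in
the real part), and the terms in `c²` are `z ^ (4d + 2)` times the conjugate of a polynomial of
degree at most `4d`; both average to zero over the circle. What remains are the recurrences
`u' = 2u + 2v + 2w`, `v' = 2u + 2v - 2w`, `w' = 2u - 2v + 2w`, `n' = 2n` for `u = uu f g`,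
`v = vv f g`, `w = ww f g`, `n = n2 f`. Hence `2u + v + w` and `n2 f * n2 g` are multiplied by `4`
and `u - v - w` by `-2` at each step.
-/

open Polynomial Complex Metric Real ComplexConjugate Set

section CircleAverage

variable {E : Type*} [NormedAddCommGroup E] {c : ℂ} {R : ℝ}

lemma circleIntegrable_of_continuous {h : ℂ → E} (hh : Continuous h) : CircleIntegrable h c R :=
  hh.continuousOn.circleIntegrable'

variable [NormedSpace ℝ E]

lemma circleAverage_comp_neg (h : ℂ → E) :
    circleAverage (fun z ↦ h (-z)) 0 R = circleAverage h 0 R := by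
  rw [← circleAverage_neg_radius (R := R)]
  simp [circleAverage_def, circleMap]

lemma circleAverage_eq_zero_of_odd {h : ℂ → E} (hh : ∀ z, h (-z) = -h z) :
    circleAverage h 0 R = 0 := by
  have h_neg : circleAverage h 0 R = -circleAverage h 0 R := calc
    circleAverage h 0 R = circleAverage (fun z ↦ (-1 : ℝ) • h z) 0 R := by
      rw [← circleAverage_comp_neg]; simp [hh]
    _ = -circleAverage h 0 R := by rw [circleAverage_fun_smul, neg_one_smul]
  have h_two : (2 : ℝ) • circleAverage h 0 R = 0 := by
    rw [two_smul]; nth_rewrite 2 [h_neg]; exact add_neg_cancel _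
  exact (smul_eq_zero.mp h_two).resolve_left two_ne_zero

lemma circleAverage_add_comp_neg {h : ℂ → E} (hh : Continuous h) :
    circleAverage (fun z ↦ h z + h (-z)) 0 R = (2 : ℝ) • circleAverage h 0 R := by
  rw [circleAverage_fun_add (circleIntegrable_of_continuous hh)
    (circleIntegrable_of_continuous (by fun_prop)), circleAverage_comp_neg, two_smul]

end CircleAverage

lemma circleAverage_const_mul {c : ℂ} {R : ℝ} (a : ℝ) (h : ℂ → ℝ) :
    circleAverage (fun z ↦ a * h z) c R = a * circleAverage h c R :=
  circleAverage_fun_smul (a := a) (f := h)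

lemma circleAverage_re {c : ℂ} {R : ℝ} {h : ℂ → ℂ} (hh : Continuous h) :
    circleAverage (fun z ↦ (h z).re) c R = (circleAverage h c R).re :=
  reCLM.circleAverage_comp_comm (circleIntegrable_of_continuous hh)

lemma circleAverage_eval {R : ℝ} (P : ℂ[X]) : circleAverage (fun z ↦ P.eval z) 0 R = P.coeff 0 := by
  rw [P.differentiable.diffContOnCl.circleAverage, coeff_zero_eq_eval_zero]

lemma dagger_eq_reflect (f : ℂ[X]) : dagger f = (f.map (starRingEnd ℂ)).reflect f.natDegree := by
  ext i
  rw [coeff_reflect, dagger, finsetSum_coeff]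
  simp only [coeff_C_mul, coeff_X_pow, mul_ite, mul_one, mul_zero, Finset.sum_ite_eq,
    Finset.mem_range, coeff_map]
  rcases le_or_gt i f.natDegree with hi | hi
  · rw [if_pos (by omega), revAt_le hi]
  · rw [if_neg (by omega), revAt_eq_self_of_lt hi, coeff_eq_zero_of_natDegree_lt hi, map_zero]

lemma natDegree_dagger {f : ℂ[X]} (hf : f.coeff 0 ≠ 0) : (dagger f).natDegree = f.natDegree := by
  rw [dagger_eq_reflect]
  refine natDegree_eq_of_le_of_coeff_ne_zero (natDegree_reflect_le.trans ?_) ?_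
  · exact max_le le_rfl natDegree_map_le
  · simpa [coeff_reflect] using hf

lemma eval_dagger {z : ℂ} (hz : ‖z‖ = 1) (f : ℂ[X]) :
    (dagger f).eval z = z ^ f.natDegree * conj (f.eval z) := by
  have hz' : conj z * z = 1 := by rw [mul_comm, mul_conj', hz]; simp
  have := invertibleOfNonzero (left_ne_zero_of_mul_eq_one hz')
  have h := eval₂_reflect_mul_pow (RingHom.id ℂ) (conj z) f.natDegree (f.map (starRingEnd ℂ))
    natDegree_map_le
  rw [eval₂_id, eval₂_id, invOf_eq_inv, inv_eq_of_mul_eq_one_right hz', eval_map, eval₂_at_apply,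
    ← dagger_eq_reflect] at h
  rw [← h, mul_comm, mul_assoc, ← mul_pow, hz', one_pow, mul_one]

lemma circleAverage_pow_mul_conj_eval_eq_zero (P : ℂ[X]) {m : ℕ} (hm : P.natDegree < m) :
    circleAverage (fun z ↦ z ^ m * conj (P.eval z)) 0 1 = 0 := by
  have h_eq : EqOn (fun z ↦ z ^ m * conj (P.eval z))
      (fun z ↦ (X ^ (m - P.natDegree) * dagger P).eval z) (sphere 0 |1|) := by
    intro z hz
    rw [abs_one, mem_sphere_zero_iff_norm] at hz
    simp only [eval_mul, eval_pow, eval_X, eval_dagger hz]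
    rw [← mul_assoc, ← pow_add, Nat.sub_add_cancel hm.le]
  rw [circleAverage_congr_sphere h_eq, circleAverage_eval, coeff_X_pow_mul', if_neg (by omega)]

lemma circleAverage_re_mul_pow_mul_conj_eval (κ : ℂ) (P : ℂ[X]) {m : ℕ} (hm : P.natDegree < m) :
    circleAverage (fun z ↦ (κ * z ^ m * conj (P.eval z)).re) 0 1 = 0 := by
  have h_smul := circleAverage_fun_smul (a := κ) (f := fun z ↦ z ^ m * conj (P.eval z)) (c := 0)
    (R := 1)
  simp only [smul_eq_mul, ← mul_assoc] at h_smul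
  rw [circleAverage_re (by fun_prop), h_smul, circleAverage_pow_mul_conj_eval_eq_zero P hm,
    mul_zero, zero_re]

lemma natDegree_comp_neg_X (g : ℂ[X]) : (g.comp (-X)).natDegree = g.natDegree := by
  simp [natDegree_comp]

lemma natDegree_mul_comp_neg_X_le (f : ℂ[X]) : (f * f.comp (-X)).natDegree ≤ 2 * f.natDegree := by
  refine natDegree_mul_le.trans ?_
  rw [natDegree_comp_neg_X]
  omega

lemma natDegree_mul_comp_neg_X_mul_lt {f g : ℂ[X]} (hd : g.natDegree = f.natDegree) :
    (f * f.comp (-X) * (g * g.comp (-X))).natDegree < 4 * f.natDegree + 2 := by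
  have := natDegree_mul_comp_neg_X_le f
  have := natDegree_mul_comp_neg_X_le g
  have := natDegree_mul_le (p := f * f.comp (-X)) (q := g * g.comp (-X))
  omega

noncomputable def rudinShapiroStep (σ : ℂ) (f : ℂ[X]) : ℂ[X] :=
  f + C σ * (X ^ (f.natDegree + 1) * (dagger f).comp (-X))

lemma coeff_zero_rudinShapiroStep (σ : ℂ) (f : ℂ[X]) :
    (rudinShapiroStep σ f).coeff 0 = f.coeff 0 := by
  simp [rudinShapiroStep]

lemma natDegree_rudinShapiroStep {σ : ℂ} (hσ : σ ≠ 0) {f : ℂ[X]} (hf : f.coeff 0 ≠ 0) :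
    (rudinShapiroStep σ f).natDegree = 2 * f.natDegree + 1 := by
  have hq0 : (dagger f).comp (-X) ≠ 0 := by
    rw [Ne, comp_neg_X_eq_zero_iff, dagger_eq_reflect, reflect_eq_zero_iff, Polynomial.map_eq_zero]
    rintro rfl
    exact hf (coeff_zero 0)
  have hs : (C σ * (X ^ (f.natDegree + 1) * (dagger f).comp (-X))).natDegree
      = 2 * f.natDegree + 1 := by
    rw [natDegree_C_mul hσ, natDegree_X_pow_mul _ hq0, natDegree_comp_neg_X, natDegree_dagger hf]
    ring
  rw [rudinShapiroStep, natDegree_add_eq_right_of_natDegree_lt (by omega), hs]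

lemma eval_rudinShapiroStep {z : ℂ} (hz : ‖z‖ = 1) (σ : ℂ) (f : ℂ[X]) :
    (rudinShapiroStep σ f).eval z
      = f.eval z + σ * (-1) ^ f.natDegree * z ^ (2 * f.natDegree + 1) * conj (f.eval (-z)) := by
  rw [rudinShapiroStep, eval_add, eval_mul, eval_C, eval_mul, eval_pow, eval_X, eval_comp,
    eval_neg, eval_X, eval_dagger (by rwa [norm_neg]), neg_pow]
  ring

lemma eval_neg_rudinShapiroStep {z : ℂ} (hz : ‖z‖ = 1) (σ : ℂ) (f : ℂ[X]) :
    (rudinShapiroStep σ f).eval (-z)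
      = f.eval (-z) - σ * (-1) ^ f.natDegree * z ^ (2 * f.natDegree + 1) * conj (f.eval z) := by
  rw [eval_rudinShapiroStep (by rwa [norm_neg]), neg_neg, (odd_two_mul_add_one _).neg_pow]
  ring

lemma circleAverage_eq_integral_circ {E : Type*} [NormedAddCommGroup E] [NormedSpace ℝ E]
    (h : ℂ → E) : circleAverage h 0 1 = (2 * π)⁻¹ • ∫ θ in (0 : ℝ)..2 * π, h (circ θ) := by
  simp [circleAverage_def, circleMap, circ]

lemma n2_eq_circleAverage (f : ℂ[X]) : n2 f = circleAverage (fun z ↦ ‖f.eval z‖ ^ 2) 0 1 := by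
  rw [n2, circleAverage_eq_integral_circ, smul_eq_mul, one_div]

lemma uu_eq_circleAverage (f g : ℂ[X]) :
    uu f g = circleAverage (fun z ↦ ‖f.eval z * g.eval z‖ ^ 2) 0 1 := by
  rw [uu, circleAverage_eq_integral_circ, smul_eq_mul, one_div]

lemma vv_eq_circleAverage (f g : ℂ[X]) :
    vv f g = circleAverage (fun z ↦ ‖f.eval z * g.eval (-z)‖ ^ 2) 0 1 := by
  rw [vv, circleAverage_eq_integral_circ, smul_eq_mul, one_div]

lemma ww_eq_circleAverage (f g : ℂ[X]) :
    ww f g = (circleAverage (fun z ↦ f.eval z * f.eval (-z) * conj (g.eval z * g.eval (-z)))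
      0 1).re := by
  rw [ww, circleAverage_eq_integral_circ, smul_re, smul_eq_mul, one_div]

lemma uu_comp_neg_X (f g : ℂ[X]) : uu f (g.comp (-X)) = vv f g := by
  simp [uu_eq_circleAverage, vv_eq_circleAverage]

lemma vv_comp_neg_X (f g : ℂ[X]) : vv f (g.comp (-X)) = uu f g := by
  simp [uu_eq_circleAverage, vv_eq_circleAverage]

lemma ww_comp_neg_X (f g : ℂ[X]) : ww f (g.comp (-X)) = ww f g := by
  simp only [ww_eq_circleAverage, eval_comp, eval_neg, eval_X, neg_neg, mul_comm (g.eval (-_))]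

section PointwiseIdentities

variable (a a' b b' c : ℂ) (hc : ‖c‖ = 1)
include hc

lemma sq_norm_step :
    ‖a + c * conj a'‖ ^ 2 = ‖a‖ ^ 2 + ‖a'‖ ^ 2 + 2 * (c * conj (a * a')).re := by
  have hc0 : c ≠ 0 := norm_ne_zero_iff.mp (by rw [hc]; exact one_ne_zero)
  apply ofReal_injective
  push_cast [← mul_conj', re_eq_add_conj, map_add, map_mul, conj_conj, ← inv_eq_conj hc]
  field_simp
  ring

lemma sq_norm_step_mul_step {ε : ℝ} (hε : ε = 1 ∨ ε = -1) :
    ‖(a + c * conj a') * (b + ε * c * conj b')‖ ^ 2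
      = (‖a * b‖ ^ 2 + ‖a' * b'‖ ^ 2) + (‖a * b'‖ ^ 2 + ‖a' * b‖ ^ 2)
        + 2 * ε * (a * a' * conj (b * b')).re
        + 2 * (c * conj (a * a' * (b * conj b + b' * conj b')
            + ε * b * b' * (a * conj a + a' * conj a'))).re
        + 2 * ε * (c ^ 2 * conj (a * a' * b * b')).re := by
  have hc0 : c ≠ 0 := norm_ne_zero_iff.mp (by rw [hc]; exact one_ne_zero)
  apply ofReal_injective
  rcases hε with rfl | rfl <;>
  · push_cast [← mul_conj', re_eq_add_conj, map_add, map_mul, map_pow, map_neg, map_one, conj_conj,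
      ← inv_eq_conj hc]
    field_simp
    ring

lemma re_step_mul_conj_step :
    ((a + c * conj a') * (a' - c * conj a) * conj ((b + c * conj b') * (b' - c * conj b))).re
      = 2 * (a * a' * conj (b * b')).re + (‖a * b‖ ^ 2 + ‖a' * b'‖ ^ 2)
        - (‖a * b'‖ ^ 2 + ‖a' * b‖ ^ 2) - 2 * (c ^ 2 * conj (a * a' * b * b')).re := by
  have hc0 : c ≠ 0 := norm_ne_zero_iff.mp (by rw [hc]; exact one_ne_zero)
  apply ofReal_injective
  push_cast [← mul_conj', re_eq_add_conj, map_add, map_sub, map_mul, map_pow, map_inv₀, conj_conj,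
    ← inv_eq_conj hc, inv_inv]
  field_simp
  ring

end PointwiseIdentities

lemma circleAverage_even_part (f g : ℂ[X]) (s t : ℝ) :
    circleAverage (fun z ↦ (‖f.eval z * g.eval z‖ ^ 2 + ‖f.eval (-z) * g.eval (-z)‖ ^ 2)
      + s * (‖f.eval z * g.eval (-z)‖ ^ 2 + ‖f.eval (-z) * g.eval (- -z)‖ ^ 2)
      + 2 * t * (f.eval z * f.eval (-z) * conj (g.eval z * g.eval (-z))).re) 0 1
      = 2 * uu f g + 2 * s * vv f g + 2 * t * ww f g := by
  rw [circleAverage_fun_add (circleIntegrable_of_continuous (by fun_prop))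
      (circleIntegrable_of_continuous (by fun_prop)),
    circleAverage_fun_add (circleIntegrable_of_continuous (by fun_prop))
      (circleIntegrable_of_continuous (by fun_prop)),
    circleAverage_add_comp_neg (h := fun z ↦ ‖f.eval z * g.eval z‖ ^ 2) (by fun_prop),
    circleAverage_const_mul, circleAverage_const_mul,
    circleAverage_add_comp_neg (h := fun z ↦ ‖f.eval z * g.eval (-z)‖ ^ 2) (by fun_prop),
    circleAverage_re (by fun_prop), ← uu_eq_circleAverage, ← vv_eq_circleAverage,
    ← ww_eq_circleAverage, smul_eq_mul, smul_eq_mul]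
  ring

lemma circleAverage_sq_norm_step_mul_step (f g : ℂ[X]) (hd : g.natDegree = f.natDegree) {κ : ℂ}
    (hκ : ‖κ‖ = 1) {ε : ℝ} (hε : ε = 1 ∨ ε = -1) :
    circleAverage (fun z ↦ ‖(f.eval z + κ * z ^ (2 * f.natDegree + 1) * conj (f.eval (-z))) *
      (g.eval z + ε * (κ * z ^ (2 * f.natDegree + 1)) * conj (g.eval (-z)))‖ ^ 2) 0 1
      = 2 * uu f g + 2 * vv f g + 2 * ε * ww f g := by
  set d := f.natDegree
  rw [circleAverage_congr_sphere (f₂ := fun z ↦ (‖f.eval z * g.eval z‖ ^ 2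
        + ‖f.eval (-z) * g.eval (-z)‖ ^ 2)
      + 1 * (‖f.eval z * g.eval (-z)‖ ^ 2 + ‖f.eval (-z) * g.eval (- -z)‖ ^ 2)
      + 2 * ε * (f.eval z * f.eval (-z) * conj (g.eval z * g.eval (-z))).re
      + 2 * (κ * z ^ (2 * d + 1) * conj (f.eval z * f.eval (-z)
          * (g.eval z * conj (g.eval z) + g.eval (-z) * conj (g.eval (-z)))
          + ε * g.eval z * g.eval (-z)
          * (f.eval z * conj (f.eval z) + f.eval (-z) * conj (f.eval (-z))))).re
      + 2 * ε * (κ ^ 2 * z ^ (4 * d + 2)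
          * conj ((f * f.comp (-X) * (g * g.comp (-X))).eval z)).re)]
  · rw [circleAverage_fun_add (circleIntegrable_of_continuous (by fun_prop))
        (circleIntegrable_of_continuous (by fun_prop)),
      circleAverage_fun_add (circleIntegrable_of_continuous (by fun_prop))
        (circleIntegrable_of_continuous (by fun_prop)), circleAverage_even_part,
      circleAverage_const_mul (2 * ε),
      circleAverage_re_mul_pow_mul_conj_eval _ _ (natDegree_mul_comp_neg_X_mul_lt hd),
      circleAverage_const_mul 2, circleAverage_eq_zero_of_odd fun z ↦ ?_]
    · ring
    rw [neg_neg, (odd_two_mul_add_one d).neg_pow, ← neg_re]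
    congr 1
    simp only [map_mul, map_add]
    ring
  · intro z hz
    rw [abs_one, mem_sphere_zero_iff_norm] at hz
    have hc : ‖κ * z ^ (2 * d + 1)‖ = 1 := by simp [hκ, hz]
    simp only [sq_norm_step_mul_step _ _ _ _ _ hc hε, neg_neg, eval_mul, eval_comp, eval_neg,
      eval_X]
    ring_nf

section Steps

variable {σ : ℂ} (hσ : ‖σ‖ = 1) {f g : ℂ[X]} (hd : g.natDegree = f.natDegree)
include hσ hd

lemma uu_rudinShapiroStep :
    uu (rudinShapiroStep σ f) (rudinShapiroStep σ g) = 2 * uu f g + 2 * vv f g + 2 * ww f g := by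
  have hκ : ‖σ * (-1) ^ f.natDegree‖ = 1 := by simp [hσ]
  have h := circleAverage_sq_norm_step_mul_step f g hd hκ (Or.inl rfl)
  rw [mul_one] at h
  rw [uu_eq_circleAverage, ← h]
  refine circleAverage_congr_sphere fun z hz ↦ ?_
  rw [abs_one, mem_sphere_zero_iff_norm] at hz
  simp only [eval_rudinShapiroStep hz, hd]
  push_cast
  ring_nf

lemma vv_rudinShapiroStep :
    vv (rudinShapiroStep σ f) (rudinShapiroStep σ g) = 2 * uu f g + 2 * vv f g - 2 * ww f g := by
  have hκ : ‖σ * (-1) ^ f.natDegree‖ = 1 := by simp [hσ]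
  -- on the circle, `z ↦ G (-z)` is the step of `g.comp (-X)` with the sign `-σ`
  have h := circleAverage_sq_norm_step_mul_step f (g.comp (-X)) (by rw [natDegree_comp_neg_X, hd])
    hκ (Or.inr rfl)
  rw [uu_comp_neg_X, vv_comp_neg_X, ww_comp_neg_X] at h
  rw [vv_eq_circleAverage, show 2 * uu f g + 2 * vv f g - 2 * ww f g
    = 2 * vv f g + 2 * uu f g + 2 * (-1) * ww f g by ring, ← h]
  refine circleAverage_congr_sphere fun z hz ↦ ?_
  rw [abs_one, mem_sphere_zero_iff_norm] at hz
  simp only [eval_rudinShapiroStep hz, eval_neg_rudinShapiroStep hz, hd, eval_comp, eval_neg,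
    eval_X, neg_neg]
  push_cast
  ring_nf

lemma ww_rudinShapiroStep :
    ww (rudinShapiroStep σ f) (rudinShapiroStep σ g) = 2 * uu f g - 2 * vv f g + 2 * ww f g := by
  rw [ww_eq_circleAverage, ← circleAverage_re (by fun_prop),
    circleAverage_congr_sphere (f₂ := fun z ↦ (‖f.eval z * g.eval z‖ ^ 2
        + ‖f.eval (-z) * g.eval (-z)‖ ^ 2)
      + (-1) * (‖f.eval z * g.eval (-z)‖ ^ 2 + ‖f.eval (-z) * g.eval (- -z)‖ ^ 2)
      + 2 * 1 * (f.eval z * f.eval (-z) * conj (g.eval z * g.eval (-z))).re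
      - 2 * ((σ * (-1) ^ f.natDegree) ^ 2 * z ^ (4 * f.natDegree + 2)
          * conj ((f * f.comp (-X) * (g * g.comp (-X))).eval z)).re)]
  · rw [circleAverage_fun_sub (circleIntegrable_of_continuous (by fun_prop))
        (circleIntegrable_of_continuous (by fun_prop)), circleAverage_even_part,
      circleAverage_const_mul,
      circleAverage_re_mul_pow_mul_conj_eval _ _ (natDegree_mul_comp_neg_X_mul_lt hd)]
    ring
  · intro z hz
    rw [abs_one, mem_sphere_zero_iff_norm] at hz
    have hc : ‖σ * (-1) ^ f.natDegree * z ^ (2 * f.natDegree + 1)‖ = 1 := by simp [hσ, hz]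
    simp only [eval_rudinShapiroStep hz, eval_neg_rudinShapiroStep hz, hd,
      re_step_mul_conj_step _ _ _ _ _ hc, neg_neg, eval_mul, eval_comp, eval_neg, eval_X]
    ring_nf

end Steps

lemma n2_rudinShapiroStep {σ : ℂ} (hσ : ‖σ‖ = 1) (f : ℂ[X]) :
    n2 (rudinShapiroStep σ f) = 2 * n2 f := by
  rw [n2_eq_circleAverage, circleAverage_congr_sphere (f₂ := fun z ↦ (‖f.eval z‖ ^ 2
      + ‖f.eval (-z)‖ ^ 2) + 2 * (σ * (-1) ^ f.natDegree * z ^ (2 * f.natDegree + 1)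
        * conj (f.eval z * f.eval (-z))).re)]
  · rw [circleAverage_fun_add (circleIntegrable_of_continuous (by fun_prop))
        (circleIntegrable_of_continuous (by fun_prop)),
      circleAverage_add_comp_neg (h := fun z ↦ ‖f.eval z‖ ^ 2) (by fun_prop),
      ← n2_eq_circleAverage, circleAverage_const_mul, circleAverage_eq_zero_of_odd fun z ↦ ?_,
      smul_eq_mul, mul_zero, add_zero]
    rw [neg_neg, (odd_two_mul_add_one _).neg_pow, ← neg_re, mul_comm (f.eval (-z))]
    congr 1
    ring
  · intro z hz
    rw [abs_one, mem_sphere_zero_iff_norm] at hz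
    have hc : ‖σ * (-1) ^ f.natDegree * z ^ (2 * f.natDegree + 1)‖ = 1 := by simp [hσ, hz]
    simp only [eval_rudinShapiroStep hz, sq_norm_step _ _ _ hc]

lemma natDegree_eq_of_rudinShapiroStep {σ : ℕ → ℂ} (hσ : ∀ k, σ k ≠ 0) {f g : ℕ → ℂ[X]}
    (hf : ∀ k, f (k + 1) = rudinShapiroStep (σ k) (f k))
    (hg : ∀ k, g (k + 1) = rudinShapiroStep (σ k) (g k)) (hf0 : (f 0).coeff 0 ≠ 0)
    (hg0 : (g 0).coeff 0 ≠ 0) (hlen : (f 0).natDegree = (g 0).natDegree) (n : ℕ) :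
    (g n).natDegree = (f n).natDegree := by
  have h_coeff (k : ℕ) : (f k).coeff 0 = (f 0).coeff 0 ∧ (g k).coeff 0 = (g 0).coeff 0 := by
    induction k with
    | zero => exact ⟨rfl, rfl⟩
    | succ k ih =>
      rw [hf, hg, coeff_zero_rudinShapiroStep, coeff_zero_rudinShapiroStep]
      exact ih
  induction n with
  | zero => exact hlen.symm
  | succ k ih =>
    rw [hf, hg, natDegree_rudinShapiroStep (hσ k) (by rw [(h_coeff k).2]; exact hg0),
      natDegree_rudinShapiroStep (hσ k) (by rw [(h_coeff k).1]; exact hf0), ih]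

lemma eq_pow_mul_of_succ_eq_mul {M : Type*} [CommMonoid M] {a : ℕ → M} {r : M}
    (h : ∀ k, a (k + 1) = r * a k) (n : ℕ) : a n = r ^ n * a 0 := by
  induction n with
  | zero => simp
  | succ n ih => rw [h, ih, pow_succ, mul_comm _ r, mul_assoc]

lemma div_eq_of_mul_three_eq {u y x N : ℝ} (n : ℕ) (hu : 3 * u = 4 ^ n * y + (-2) ^ n * x) :
    u / (4 ^ n * N) = y / (3 * N) + (-(1 : ℝ) / 2) ^ n * (x / (3 * N)) := by
  have h_pow : (-2 : ℝ) ^ n = 4 ^ n * (-(1 : ℝ) / 2) ^ n := by rw [← mul_pow]; norm_num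
  rw [show u = 4 ^ n * (y + (-(1 : ℝ) / 2) ^ n * x) / 3 by
      linear_combination hu / 3 + x * h_pow / 3,
    div_div, mul_comm (3 : ℝ), mul_assoc, mul_div_mul_left _ _ (by positivity)]
  ring

theorem cdf_exact_formula_general (f g : ℕ → Polynomial ℂ) (σ : ℕ → ℝ)
    (hσ : ∀ n, σ n = 1 ∨ σ n = -1)
    (hf0 : (f 0).coeff 0 ≠ 0) (hg0 : (g 0).coeff 0 ≠ 0)
    (hlen : (f 0).natDegree = (g 0).natDegree)
    (hf : ∀ n, f (n + 1) = f n + Polynomial.C (σ n : ℂ) *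
      (Polynomial.X ^ ((f n).natDegree + 1) * (dagger (f n)).comp (-Polynomial.X)))
    (hg : ∀ n, g (n + 1) = g n + Polynomial.C (σ n : ℂ) *
      (Polynomial.X ^ ((g n).natDegree + 1) * (dagger (g n)).comp (-Polynomial.X)))
    (n : ℕ) :
    uu (f n) (g n) / (n2 (f n) * n2 (g n))
      = (2 * uu (f 0) (g 0) + vv (f 0) (g 0) + ww (f 0) (g 0)) / (3 * n2 (f 0) * n2 (g 0))
        + (-(1:ℝ)/2) ^ n *
          ((uu (f 0) (g 0) - vv (f 0) (g 0) - ww (f 0) (g 0)) / (3 * n2 (f 0) * n2 (g 0))) := by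
  have hσ_norm (k : ℕ) : ‖(σ k : ℂ)‖ = 1 := by rcases hσ k with h | h <;> simp [h]
  have hf_step (k : ℕ) : f (k + 1) = rudinShapiroStep (σ k) (f k) := hf k
  have hg_step (k : ℕ) : g (k + 1) = rudinShapiroStep (σ k) (g k) := hg k
  have h_deg := natDegree_eq_of_rudinShapiroStep
    (fun k ↦ norm_ne_zero_iff.mp (by rw [hσ_norm]; exact one_ne_zero)) hf_step hg_step hf0 hg0 hlen
  have h_norms := eq_pow_mul_of_succ_eq_mul (a := fun k ↦ n2 (f k) * n2 (g k)) (r := 4) fun k ↦ by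
    simp only [hf_step, hg_step, n2_rudinShapiroStep (hσ_norm k)]; ring
  have h_growing := eq_pow_mul_of_succ_eq_mul (r := 4)
    (a := fun k ↦ 2 * uu (f k) (g k) + vv (f k) (g k) + ww (f k) (g k)) fun k ↦ by
      simp only [hf_step, hg_step, uu_rudinShapiroStep (hσ_norm k) (h_deg k),
        vv_rudinShapiroStep (hσ_norm k) (h_deg k), ww_rudinShapiroStep (hσ_norm k) (h_deg k)]
      ring
  have h_oscillating := eq_pow_mul_of_succ_eq_mul (r := -2)
    (a := fun k ↦ uu (f k) (g k) - vv (f k) (g k) - ww (f k) (g k)) fun k ↦ by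
      simp only [hf_step, hg_step, uu_rudinShapiroStep (hσ_norm k) (h_deg k),
        vv_rudinShapiroStep (hσ_norm k) (h_deg k), ww_rudinShapiroStep (hσ_norm k) (h_deg k)]
      ring
  rw [h_norms n, mul_assoc 3]
  exact div_eq_of_mul_three_eq n (by linear_combination h_growing n + h_oscillating n)

/-- Exact formula for the crosscorrelation demerit factor ‖f_n g_n‖₂²/(‖f_n‖₂²‖g_n‖₂²)
of a pair of stems of Rudin-Shapiro-like polynomials. -/
theorem cdf_exact_formula (f g : ℕ → Polynomial ℂ) (σ : ℕ → ℝ)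
    (hσ : ∀ n, σ n = 1 ∨ σ n = -1)
    (hne_f : f 0 ≠ 0) (hne_g : g 0 ≠ 0)
    (hf0 : (f 0).coeff 0 ≠ 0) (hg0 : (g 0).coeff 0 ≠ 0)
    (hlen : (f 0).natDegree = (g 0).natDegree)
    (hf : ∀ n, f (n + 1) = f n + Polynomial.C (σ n : ℂ) *
      (Polynomial.X ^ ((f n).natDegree + 1) * (dagger (f n)).comp (-Polynomial.X)))
    (hg : ∀ n, g (n + 1) = g n + Polynomial.C (σ n : ℂ) *
      (Polynomial.X ^ ((g n).natDegree + 1) * (dagger (g n)).comp (-Polynomial.X)))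
    (n : ℕ) :
    uu (f n) (g n) / (n2 (f n) * n2 (g n))
      = (2 * uu (f 0) (g 0) + vv (f 0) (g 0) + ww (f 0) (g 0)) / (3 * n2 (f 0) * n2 (g 0))
        + (-(1:ℝ)/2) ^ n *
          ((uu (f 0) (g 0) - vv (f 0) (g 0) - ww (f 0) (g 0)) / (3 * n2 (f 0) * n2 (g 0))) :=
  cdf_exact_formula_general f g σ hσ hf0 hg0 hlen hf hg n
end

section
/- Let k be a positive integer, f_0(z) = 1 + z + ... + z^{4k-1}, and g_0(z) = (1-z)(1-z^2)(1-z^{4k})/(1-z^4). Then ‖f_0 · g_0~‖_2^2 = 12k, where g_0~(z) = g_0(-z). -/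
/-!
Both seeds are a length-4 block repeated `k` times, so with `S = ∑_{m<k} z^{4m}` one has
`f₀ = (1+z)(1+z²) S` and `g₀(-z) = (1+z)(1-z²) S`; since `(1-z⁴) S = 1 - z^{4k}`, this gives
`f₀(z) g₀(-z) = (1+z)² S (1 - z^{4k})`. Adding to `p` a copy of `q` shifted beyond the degree of
`p` adds the squared coefficient norms, so the norm is `2 · k · ‖(1+z)²‖² = 2 · k · 6`.
-/

noncomputable def fSeed (k : ℕ) : Polynomial ℂ :=
  ∑ j ∈ Finset.range (4 * k), Polynomial.X ^ j

noncomputable def gSeed (k : ℕ) : Polynomial ℂ :=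
  ∑ j ∈ Finset.range (4 * k),
    Polynomial.C (if j % 4 = 0 ∨ j % 4 = 3 then (1 : ℂ) else -1) * Polynomial.X ^ j

open Polynomial Finset

section CoeffNormSq

variable {R : Type*} [SeminormedRing R]

noncomputable def coeffNormSq (p : R[X]) : ℝ := p.sum fun _ a => ‖a‖ ^ 2

theorem coeffNormSq_eq_sum_range {p : R[X]} {n : ℕ} (hn : p.natDegree < n) :
    coeffNormSq p = ∑ j ∈ range n, ‖p.coeff j‖ ^ 2 :=
  sum_over_range' p (fun _ => by simp) n hn

theorem coeffNormSq_neg (p : R[X]) : coeffNormSq (-p) = coeffNormSq p := by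
  simp only [coeffNormSq, Polynomial.sum_def, support_neg, coeff_neg, norm_neg]

theorem coeffNormSq_add_X_pow_mul {p : R[X]} {n : ℕ} (hp : p.natDegree < n) (q : R[X]) :
    coeffNormSq (p + X ^ n * q) = coeffNormSq p + coeffNormSq q := by
  have hdeg : (p + X ^ n * q).natDegree < n + (q.natDegree + 1) := by
    refine (natDegree_add_le _ _).trans_lt (max_lt (by omega) ?_)
    calc (X ^ n * q).natDegree ≤ (X ^ n : R[X]).natDegree + q.natDegree := natDegree_mul_le
      _ < n + (q.natDegree + 1) := by have := natDegree_X_pow_le (R := R) n; omega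
  rw [coeffNormSq_eq_sum_range hdeg, Finset.sum_range_add, coeffNormSq_eq_sum_range hp,
    coeffNormSq_eq_sum_range q.natDegree.lt_succ_self]
  congr 1 <;> refine sum_congr rfl fun j hj => ?_ <;> rw [mem_range] at hj
  · rw [coeff_add, coeff_X_pow_mul', if_neg (by omega), add_zero]
  · rw [coeff_add, coeff_X_pow_mul', if_pos (by omega), coeff_eq_zero_of_natDegree_lt (by omega),
      zero_add, Nat.add_sub_cancel_left]

end CoeffNormSq

section CommRing

variable {R : Type*} [SeminormedCommRing R]

theorem coeffNormSq_mul_one_sub_X_pow {p : R[X]} {n : ℕ} (hp : p.natDegree < n) :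
    coeffNormSq (p * (1 - X ^ n)) = 2 * coeffNormSq p := by
  rw [show p * (1 - X ^ n) = p + X ^ n * -p by ring, coeffNormSq_add_X_pow_mul hp, coeffNormSq_neg,
    two_mul]

theorem coeffNormSq_mul_geom_sum {p : R[X]} {n : ℕ} (hp : p.natDegree < n) (k : ℕ) :
    coeffNormSq (p * ∑ m ∈ range k, (X ^ n) ^ m) = k * coeffNormSq p := by
  induction k with
  | zero => simp [coeffNormSq]
  | succ k ih =>
    rw [geom_sum_succ, show p * (X ^ n * ∑ m ∈ range k, (X ^ n) ^ m + 1)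
        = p + X ^ n * (p * ∑ m ∈ range k, (X ^ n) ^ m) by ring,
      coeffNormSq_add_X_pow_mul hp, ih]
    push_cast
    ring

end CommRing

theorem natDegree_mul_geom_sum_lt {R : Type*} [Semiring R] {p : R[X]} {n k : ℕ}
    (hp : p.natDegree < n) (hk : 0 < k) :
    (p * ∑ m ∈ range k, (X ^ n) ^ m).natDegree < n * k := by
  obtain ⟨k, rfl⟩ := Nat.exists_eq_succ_of_ne_zero hk.ne'
  have hsum : (∑ m ∈ range (k + 1), (X ^ n : R[X]) ^ m).natDegree ≤ n * k := by
    refine natDegree_sum_le_of_forall_le _ _ fun m hm => ?_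
    rw [← pow_mul]
    exact (natDegree_X_pow_le _).trans
      (Nat.mul_le_mul_left n (Nat.lt_succ_iff.mp (mem_range.mp hm)))
  calc _ ≤ p.natDegree + (∑ m ∈ range (k + 1), (X ^ n : R[X]) ^ m).natDegree := natDegree_mul_le
    _ < n * (k + 1) := by rw [Nat.mul_succ]; omega

theorem sum_range_mul_of_periodic {R : Type*} [Semiring R] {c : ℕ → R} {n : ℕ}
    (hc : Function.Periodic c n) (k : ℕ) :
    ∑ j ∈ range (n * k), C (c j) * X ^ j
      = (∑ i ∈ range n, C (c i) * X ^ i) * ∑ m ∈ range k, (X ^ n) ^ m := by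
  induction k with
  | zero => simp
  | succ k ih =>
    rw [Nat.mul_succ, Finset.sum_range_add, ih, sum_range_succ, mul_add]
    congr 1
    rw [Finset.sum_mul]
    refine Finset.sum_congr rfl fun i _ => ?_
    have hci : c (n * k + i) = c i := by
      simpa [add_comm, mul_comm] using hc.nat_mul k i
    rw [hci, ← pow_mul, mul_assoc, ← pow_add, add_comm i]

theorem fSeed_eq (k : ℕ) : fSeed k = (1 + X + X ^ 2 + X ^ 3) * ∑ m ∈ range k, (X ^ 4) ^ m := by
  have h := sum_range_mul_of_periodic (c := fun _ => (1 : ℂ)) (n := 4) (fun _ => rfl) k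
  simp only [map_one, one_mul] at h
  rw [fSeed, h]
  simp [sum_range_succ]

theorem gSeed_comp_neg_X (k : ℕ) :
    (gSeed k).comp (-X) = (1 + X - X ^ 2 - X ^ 3) * ∑ m ∈ range k, (X ^ 4) ^ m := by
  have hc : Function.Periodic (fun j : ℕ => if j % 4 = 0 ∨ j % 4 = 3 then (1 : ℂ) else -1) 4 := by
    intro j
    simp [Nat.add_mod_right]
  rw [gSeed, sum_range_mul_of_periodic hc, mul_comp]
  congr 1
  · simp [sum_range_succ, Odd.neg_pow (by decide : Odd 3), sub_eq_add_neg, add_assoc]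
  · simp only [Polynomial.sum_comp, pow_comp, X_comp]
    rw [show (-X : ℂ[X]) ^ 4 = X ^ 4 by ring]

theorem fSeed_mul_gSeed_comp_neg_X (k : ℕ) :
    fSeed k * (gSeed k).comp (-X)
      = (1 + X) ^ 2 * (∑ m ∈ range k, (X ^ 4) ^ m) * (1 - X ^ (4 * k)) := by
  have hgeom := geom_sum_mul_neg (X ^ 4 : ℂ[X]) k
  rw [← pow_mul] at hgeom
  rw [fSeed_eq, gSeed_comp_neg_X]
  linear_combination (1 + X) ^ 2 * (∑ m ∈ range k, (X ^ 4 : ℂ[X]) ^ m) * hgeom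

theorem natDegree_one_add_X_sq_lt : ((1 + X) ^ 2 : ℂ[X]).natDegree < 4 := by
  have : ((1 + X) ^ 2 : ℂ[X]).natDegree ≤ 2 := by compute_degree
  omega

theorem coeffNormSq_one_add_X_sq : coeffNormSq ((1 + X) ^ 2 : ℂ[X]) = 6 := by
  rw [coeffNormSq_eq_sum_range natDegree_one_add_X_sq_lt,
    show ((1 + X) ^ 2 : ℂ[X]) = 1 + 2 * X + X ^ 2 by ring]
  norm_num [sum_range_succ, coeff_one, coeff_X]

/-- For the all-ones seed f₀ of length 4k and the seed g₀ consisting of k repetitions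
of (1,-1,-1,1), the squared L² norm of f₀·g₀(-z) is 12k. -/
theorem norm_sq_prod_seeds_tilde (k : ℕ) (hk : 0 < k) :
    ∑ j ∈ Finset.range ((fSeed k * (gSeed k).comp (-Polynomial.X)).natDegree + 1),
        ‖(fSeed k * (gSeed k).comp (-Polynomial.X)).coeff j‖ ^ 2 = 12 * (k : ℝ) := by
  rw [← coeffNormSq_eq_sum_range (Nat.lt_succ_self _), fSeed_mul_gSeed_comp_neg_X,
    coeffNormSq_mul_one_sub_X_pow (natDegree_mul_geom_sum_lt natDegree_one_add_X_sq_lt hk),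
    coeffNormSq_mul_geom_sum natDegree_one_add_X_sq_lt, coeffNormSq_one_add_X_sq]
  ring
end
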